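/- arXiv:1603.00330 — 9 statements merged into one kernel-verified Lean document; each statement's English description precedes it below -/
import Mathlib

section
/- Every completely simple semigroup is equidivisible; moreover, for every u,v,x,y in a completely simple semigroup S with uv = xy, there exist t₁,t₂ in S¹ such that ut₁ = x, t₁y = v, u = xt₂, and y = t₂v. -/
/-!
Fix a minimal right ideal `R`. Its left translates `cR` are again minimal right ideals, so their
union is a two-sided ideal, hence all of `S`: every `a` lies in a minimal right ideal, which then
equals `abS`. Thus `a ∈ abS` and dually `b ∈ Sab` for all `a, b`. In particular every element
`w` is regular, with some `w'` satisfying `ww'w = w`. If `uv = xy = w`, then `x ∈ wS` and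
`v ∈ Sw`, so `ww'` fixes `x` on the left and `w'w` fixes `v` on the right; hence `t₁ = vw'x`
satisfies `ut₁ = ww'x = x` and `t₁y = vw'w = v`. Exchanging the two factorizations gives `t₂`.
-/

variable {S : Type*} [Semigroup S]

/-- A (two-sided) ideal of a semigroup. -/
def IsIdeal (I : Set S) : Prop :=
  I.Nonempty ∧ ∀ s ∈ I, ∀ x : S, x * s ∈ I ∧ s * x ∈ I

/-- A left ideal of a semigroup. -/
def IsLeftIdeal (L : Set S) : Prop :=
  L.Nonempty ∧ ∀ s ∈ L, ∀ x : S, x * s ∈ L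

/-- A right ideal of a semigroup. -/
def IsRightIdeal (R : Set S) : Prop :=
  R.Nonempty ∧ ∀ s ∈ R, ∀ x : S, s * x ∈ R

/-- A semigroup is completely simple if it is simple and has a minimal left ideal and a
minimal right ideal. -/
def CompletelySimple (S : Type*) [Semigroup S] : Prop :=
  (∀ I : Set S, IsIdeal I → I = Set.univ) ∧
  (∃ L : Set S, IsLeftIdeal L ∧ ∀ L' : Set S, IsLeftIdeal L' → L' ⊆ L → L' = L) ∧
  (∃ R : Set S, IsRightIdeal R ∧ ∀ R' : Set S, IsRightIdeal R' → R' ⊆ R → R' = R)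

def IsMinimalRightIdeal (R : Set S) : Prop :=
  IsRightIdeal R ∧ ∀ R' : Set S, IsRightIdeal R' → R' ⊆ R → R' = R

def IsMinimalLeftIdeal (L : Set S) : Prop :=
  IsLeftIdeal L ∧ ∀ L' : Set S, IsLeftIdeal L' → L' ⊆ L → L' = L

namespace IsMinimalRightIdeal

variable {R : Set S}

theorem image_mul_left (hR : IsMinimalRightIdeal R) (c : S) :
    IsMinimalRightIdeal ((c * ·) '' R) := by
  refine ⟨⟨hR.1.1.image _, ?_⟩, fun R' hR' hsub => ?_⟩
  · rintro _ ⟨r, hr, rfl⟩ x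
    exact ⟨r * x, hR.1.2 r hr x, (mul_assoc c r x).symm⟩
  obtain ⟨_, hz⟩ := hR'.1
  obtain ⟨r₀, hr₀, rfl⟩ := hsub hz
  have hP : IsRightIdeal {r | r ∈ R ∧ c * r ∈ R'} :=
    ⟨⟨r₀, hr₀, hz⟩, fun r ⟨hr, hcr⟩ x => ⟨hR.1.2 r hr x, mul_assoc c r x ▸ hR'.2 _ hcr x⟩⟩
  have hPR := hR.2 _ hP fun _ h => h.1
  refine hsub.antisymm ?_
  rintro _ ⟨r, hr, rfl⟩
  exact (hPR.symm ▸ hr : r ∈ {r | r ∈ R ∧ c * r ∈ R'}).2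

theorem exists_eq_mul_mul_right (hR : IsMinimalRightIdeal R) {a : S} (ha : a ∈ R) (b : S) :
    ∃ s, a = a * b * s := by
  have hT : IsRightIdeal (Set.range (a * b * ·)) :=
    ⟨⟨a * b * a, a, rfl⟩, by rintro _ ⟨s, rfl⟩ x; exact ⟨s * x, (mul_assoc _ s x).symm⟩⟩
  have hsub : Set.range (a * b * ·) ⊆ R := by
    rintro _ ⟨s, rfl⟩
    change a * b * s ∈ R
    exact (mul_assoc a b s).symm ▸ hR.1.2 a ha (b * s)
  obtain ⟨s, hs⟩ : a ∈ Set.range (a * b * ·) := hR.2 _ hT hsub ▸ ha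
  exact ⟨s, hs.symm⟩

end IsMinimalRightIdeal

namespace IsMinimalLeftIdeal

variable {L : Set S}

theorem image_mul_right (hL : IsMinimalLeftIdeal L) (c : S) :
    IsMinimalLeftIdeal ((· * c) '' L) := by
  refine ⟨⟨hL.1.1.image _, ?_⟩, fun L' hL' hsub => ?_⟩
  · rintro _ ⟨l, hl, rfl⟩ x
    exact ⟨x * l, hL.1.2 l hl x, mul_assoc x l c⟩
  obtain ⟨_, hz⟩ := hL'.1
  obtain ⟨l₀, hl₀, rfl⟩ := hsub hz
  have hP : IsLeftIdeal {l | l ∈ L ∧ l * c ∈ L'} :=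
    ⟨⟨l₀, hl₀, hz⟩, fun l ⟨hl, hlc⟩ x => ⟨hL.1.2 l hl x, (mul_assoc x l c).symm ▸ hL'.2 _ hlc x⟩⟩
  have hPL := hL.2 _ hP fun _ h => h.1
  refine hsub.antisymm ?_
  rintro _ ⟨l, hl, rfl⟩
  exact (hPL.symm ▸ hl : l ∈ {l | l ∈ L ∧ l * c ∈ L'}).2

theorem exists_eq_mul_mul_left (hL : IsMinimalLeftIdeal L) {b : S} (hb : b ∈ L) (a : S) :
    ∃ s, b = s * (a * b) := by
  have hT : IsLeftIdeal (Set.range (· * (a * b))) :=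
    ⟨⟨b * (a * b), b, rfl⟩, by rintro _ ⟨s, rfl⟩ x; exact ⟨x * s, mul_assoc x s _⟩⟩
  have hsub : Set.range (· * (a * b)) ⊆ L := by
    rintro _ ⟨s, rfl⟩
    change s * (a * b) ∈ L
    exact mul_assoc s a b ▸ hL.1.2 b hb (s * a)
  obtain ⟨s, hs⟩ : b ∈ Set.range (· * (a * b)) := hL.2 _ hT hsub ▸ hb
  exact ⟨s, hs.symm⟩

end IsMinimalLeftIdeal

namespace CompletelySimple

variable (hS : CompletelySimple S)
include hS

theorem exists_mem_isMinimalRightIdeal (a : S) : ∃ R, IsMinimalRightIdeal R ∧ a ∈ R := by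
  obtain ⟨hsimple, -, R₀, hR₀⟩ := hS
  have hI : IsIdeal {a : S | ∃ R, IsMinimalRightIdeal R ∧ a ∈ R} := by
    refine ⟨hR₀.1.1.imp fun r hr => ⟨R₀, hR₀, hr⟩, ?_⟩
    rintro s ⟨R, hR, hs⟩ x
    exact ⟨⟨_, hR.image_mul_left x, s, hs, rfl⟩, ⟨R, hR, hR.1.2 s hs x⟩⟩
  exact Set.eq_univ_iff_forall.mp (hsimple _ hI) a

theorem exists_mem_isMinimalLeftIdeal (b : S) : ∃ L, IsMinimalLeftIdeal L ∧ b ∈ L := by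
  obtain ⟨hsimple, ⟨L₀, hL₀⟩, -⟩ := hS
  have hI : IsIdeal {b : S | ∃ L, IsMinimalLeftIdeal L ∧ b ∈ L} := by
    refine ⟨hL₀.1.1.imp fun l hl => ⟨L₀, hL₀, hl⟩, ?_⟩
    rintro s ⟨L, hL, hs⟩ x
    exact ⟨⟨L, hL, hL.1.2 s hs x⟩, ⟨_, hL.image_mul_right x, s, hs, rfl⟩⟩
  exact Set.eq_univ_iff_forall.mp (hsimple _ hI) b

theorem exists_eq_mul_mul_right (a b : S) : ∃ s, a = a * b * s := by
  obtain ⟨R, hR, ha⟩ := hS.exists_mem_isMinimalRightIdeal a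
  exact hR.exists_eq_mul_mul_right ha b

theorem exists_eq_mul_mul_left (a b : S) : ∃ s, b = s * (a * b) := by
  obtain ⟨L, hL, hb⟩ := hS.exists_mem_isMinimalLeftIdeal b
  exact hL.exists_eq_mul_mul_left hb a

theorem exists_mul_mul_eq (w : S) : ∃ w', w * w' * w = w := by
  obtain ⟨t, ht⟩ := hS.exists_eq_mul_mul_right w w
  obtain ⟨s, hs⟩ := hS.exists_eq_mul_mul_left w w
  have hwt : w * t = s * w :=
    calc w * t = s * (w * w) * t := by rw [← hs]
      _ = s * (w * w * t) := by simp only [mul_assoc]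
      _ = s * w := by rw [← ht]
  refine ⟨t, ?_⟩
  calc w * t * w = s * (w * w) := by rw [hwt, mul_assoc]
    _ = w := hs.symm

end CompletelySimple

theorem exists_mul_eq_and_mul_eq {w w' u v x y : S} (hw : w * w' * w = w) (huv : u * v = w)
    (hxy : x * y = w) (hx : ∃ s, x = w * s) (hv : ∃ r, v = r * w) :
    ∃ t, u * t = x ∧ t * y = v := by
  obtain ⟨s, rfl⟩ := hx
  obtain ⟨r, rfl⟩ := hv
  refine ⟨r * w * w' * (w * s), ?_, ?_⟩
  · calc u * (r * w * w' * (w * s)) = u * (r * w) * w' * w * s := by simp only [mul_assoc]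
      _ = w * s := by rw [huv, hw]
  · calc r * w * w' * (w * s) * y = r * (w * w' * (w * s * y)) := by simp only [mul_assoc]
      _ = r * w := by rw [hxy, hw]

/-- Every completely simple semigroup is equidivisible; moreover the factorizations are
related in both directions. -/
theorem completelySimple_equidivisible (hS : CompletelySimple S)
    (u v x y : S) (h : u * v = x * y) :
    ((∃ t : WithOne S, (u : WithOne S) * t = (x : WithOne S) ∧
        (v : WithOne S) = t * (y : WithOne S)) ∨
      (∃ t : WithOne S, (x : WithOne S) * t = (u : WithOne S) ∧
        (y : WithOne S) = t * (v : WithOne S))) ∧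
    (∃ t₁ t₂ : WithOne S, (u : WithOne S) * t₁ = (x : WithOne S) ∧
      t₁ * (y : WithOne S) = (v : WithOne S) ∧
      (u : WithOne S) = (x : WithOne S) * t₂ ∧ (y : WithOne S) = t₂ * (v : WithOne S)) := by
  obtain ⟨w', hw'⟩ := hS.exists_mul_mul_eq (u * v)
  obtain ⟨t₁, hut₁, ht₁y⟩ := exists_mul_eq_and_mul_eq hw' rfl h.symm
    (h ▸ hS.exists_eq_mul_mul_right x y) (hS.exists_eq_mul_mul_left u v)
  obtain ⟨t₂, hxt₂, ht₂v⟩ := exists_mul_eq_and_mul_eq hw' h.symm rfl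
    (hS.exists_eq_mul_mul_right u v) (h ▸ hS.exists_eq_mul_mul_left x y)
  have coe_mul_eq {a b c : S} (habc : a * b = c) : (a : WithOne S) * b = c := by
    exact_mod_cast habc
  exact ⟨Or.inl ⟨t₁, coe_mul_eq hut₁, (coe_mul_eq ht₁y).symm⟩,
    ⟨t₁, t₂, coe_mul_eq hut₁, coe_mul_eq ht₁y, (coe_mul_eq hxt₂).symm, (coe_mul_eq ht₂v).symm⟩⟩
end

section
/- Let φ : A⁺ → S be a surjective semigroup homomorphism onto a finite semigroup S, where A is a finite alphabet. Define the two-sided Cayley graph Γ_φ with vertex set S¹ × S¹ and an edge from (s₁,t₁) to (s₂,t₂) labeled a ∈ A whenever s₁φ(a) = s₂ and t₁ = φ(a)t₂. For u ∈ A⁺ let p_u be the unique path from (I, φ(u)) to (φ(u), I) labeled u, and let C(p_u) be the set of strongly connected components of Γ_φ meeting p_u. Then the relation u ≈_φ v defined by φ(u) = φ(v) and C(p_u) = C(p_v) is a congruence on A⁺. -/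
variable {A S : Type*}

/-- Image of a word under the extension of `φ` to the free monoid, in `S¹ = WithOne S`. -/
def phiStar [Semigroup S] (φ : A → S) (w : List A) : WithOne S :=
  (w.map fun a => (φ a : WithOne S)).prod

/-- `φ` induces a surjective homomorphism `A⁺ → S`. -/
def PlusSurj [Semigroup S] (φ : A → S) : Prop :=
  ∀ s : S, ∃ w : List A, w ≠ [] ∧ phiStar φ w = (s : WithOne S)

/-- An edge `((s₁,t₁), a, (s₂,t₂))` of the two-sided Cayley graph `Γ_φ`. -/
def IsEdge [Semigroup S] (φ : A → S)
    (e : (WithOne S × WithOne S) × A × (WithOne S × WithOne S)) : Prop :=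
  e.1.1 * (φ e.2.1 : WithOne S) = e.2.2.1 ∧ e.1.2 = (φ e.2.1 : WithOne S) * e.2.2.2

/-- There is a path labeled `w` from `p` to `q` in `Γ_φ`. -/
def HasPath [Semigroup S] (φ : A → S) (p q : WithOne S × WithOne S) (w : List A) : Prop :=
  p.1 * phiStar φ w = q.1 ∧ p.2 = phiStar φ w * q.2

/-- There is a (possibly empty) path from `p` to `q` in `Γ_φ`. -/
def Reach [Semigroup S] (φ : A → S) (p q : WithOne S × WithOne S) : Prop :=
  ∃ w : List A, HasPath φ p q w

/-- `p` and `q` lie in the same strongly connected component of `Γ_φ`. -/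
def SameSCC [Semigroup S] (φ : A → S) (p q : WithOne S × WithOne S) : Prop :=
  Reach φ p q ∧ Reach φ q p

/-- `p` is a vertex of the canonical path `p_u` of the word `u` in `Γ_φ`. -/
def OnPath [Semigroup S] (φ : A → S) (u : List A) (p : WithOne S × WithOne S) : Prop :=
  ∃ u₁ u₂ : List A, u = u₁ ++ u₂ ∧ p = (phiStar φ u₁, phiStar φ u₂)

/-- The paths `p_u` and `p_v` meet the same strongly connected components of `Γ_φ`,
i.e. `C(p_u) = C(p_v)`. -/
def SameComponents [Semigroup S] (φ : A → S) (u v : List A) : Prop :=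
  (∀ p, OnPath φ u p → ∃ q, OnPath φ v q ∧ SameSCC φ p q) ∧
  (∀ q, OnPath φ v q → ∃ p, OnPath φ u p ∧ SameSCC φ p q)

/-- The two-sided connected congruence `u ≈_φ v`. -/
def ConnCong [Semigroup S] (φ : A → S) (u v : List A) : Prop :=
  phiStar φ u = phiStar φ v ∧ SameComponents φ u v

/-- `e` is an edge traversed by the canonical path `p_u` in `Γ_φ`. -/
def EdgeOfPath [Semigroup S] (φ : A → S) (u : List A)
    (e : (WithOne S × WithOne S) × A × (WithOne S × WithOne S)) : Prop :=
  ∃ u₁ u₂ : List A, u = u₁ ++ e.2.1 :: u₂ ∧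
    e.1 = (phiStar φ u₁, phiStar φ (e.2.1 :: u₂)) ∧
    e.2.2 = (phiStar φ (u₁ ++ [e.2.1]), phiStar φ u₂)

/-- `e` is a transition edge traversed by `p_u`: an edge of `p_u` whose endpoints lie in
distinct strongly connected components of `Γ_φ`. -/
def IsTransitionOfPath [Semigroup S] (φ : A → S) (u : List A)
    (e : (WithOne S × WithOne S) × A × (WithOne S × WithOne S)) : Prop :=
  EdgeOfPath φ u e ∧ ¬ SameSCC φ e.1 e.2.2

/-- The two-sided Karnofsky–Rhodes congruence `u ≡_φ v`: same image under `φ` and same set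
of transition edges. -/
def KRCong [Semigroup S] (φ : A → S) (u v : List A) : Prop :=
  phiStar φ u = phiStar φ v ∧
  ∀ e, IsTransitionOfPath φ u e ↔ IsTransitionOfPath φ v e

/-!
The path `p_{uw}` is the path `p_u` with every vertex `(s, t)` replaced by `(s, t φ(w))`,
followed by the path `p_w` with every vertex `(s, t)` replaced by `(φ(u) s, t)`. These two
translations of the vertex set map paths to paths, hence preserve strong connectivity, and
when `φ(u) = φ(v)` and `φ(w) = φ(w')` they translate `p_u, p_w` and `p_v, p_w'` by the same
elements. So the components met by `p_{uw}` are those met by `p_{vw'}` as soon as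
`u ≈_φ v` and `w ≈_φ w'`.
-/

section

variable [Semigroup S] {φ : A → S}

@[simp]
lemma phiStar_nil : phiStar φ [] = 1 := rfl

@[simp]
lemma phiStar_append (u w : List A) : phiStar φ (u ++ w) = phiStar φ u * phiStar φ w := by
  simp [phiStar]

namespace Reach

lemma refl (p : WithOne S × WithOne S) : Reach φ p p :=
  ⟨[], by simp [HasPath]⟩

lemma trans {p q r : WithOne S × WithOne S} (hpq : Reach φ p q) (hqr : Reach φ q r) :
    Reach φ p r := by
  obtain ⟨x, hx₁, hx₂⟩ := hpq
  obtain ⟨y, hy₁, hy₂⟩ := hqr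
  exact ⟨x ++ y, by rw [phiStar_append, ← mul_assoc, hx₁, hy₁],
    by rw [phiStar_append, mul_assoc, ← hy₂, hx₂]⟩

lemma mul_right {p q : WithOne S × WithOne S} (h : Reach φ p q) (t : WithOne S) :
    Reach φ (p.1, p.2 * t) (q.1, q.2 * t) := by
  obtain ⟨x, hx₁, hx₂⟩ := h
  exact ⟨x, hx₁, by simp only [← mul_assoc, ← hx₂]⟩

lemma mul_left {p q : WithOne S × WithOne S} (h : Reach φ p q) (s : WithOne S) :
    Reach φ (s * p.1, p.2) (s * q.1, q.2) := by
  obtain ⟨x, hx₁, hx₂⟩ := h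
  exact ⟨x, by simp only [mul_assoc, hx₁], hx₂⟩

end Reach

namespace SameSCC

lemma refl (p : WithOne S × WithOne S) : SameSCC φ p p :=
  ⟨.refl p, .refl p⟩

lemma symm {p q : WithOne S × WithOne S} (h : SameSCC φ p q) : SameSCC φ q p :=
  ⟨h.2, h.1⟩

lemma trans {p q r : WithOne S × WithOne S} (hpq : SameSCC φ p q) (hqr : SameSCC φ q r) :
    SameSCC φ p r :=
  ⟨hpq.1.trans hqr.1, hqr.2.trans hpq.2⟩

lemma mul_right {p q : WithOne S × WithOne S} (h : SameSCC φ p q) (t : WithOne S) :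
    SameSCC φ (p.1, p.2 * t) (q.1, q.2 * t) :=
  ⟨h.1.mul_right t, h.2.mul_right t⟩

lemma mul_left {p q : WithOne S × WithOne S} (h : SameSCC φ p q) (s : WithOne S) :
    SameSCC φ (s * p.1, p.2) (s * q.1, q.2) :=
  ⟨h.1.mul_left s, h.2.mul_left s⟩

end SameSCC

lemma onPath_append_iff {u w : List A} {p : WithOne S × WithOne S} :
    OnPath φ (u ++ w) p ↔
      (∃ q, OnPath φ u q ∧ p = (q.1, q.2 * phiStar φ w)) ∨
        ∃ q, OnPath φ w q ∧ p = (phiStar φ u * q.1, q.2) := by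
  constructor
  · rintro ⟨x, y, hxy, rfl⟩
    rcases List.append_eq_append_iff.mp hxy.symm with ⟨a, rfl, rfl⟩ | ⟨c, rfl, rfl⟩
    · exact .inl ⟨_, ⟨x, a, rfl, rfl⟩, by simp⟩
    · exact .inr ⟨_, ⟨c, y, rfl, rfl⟩, by simp⟩
  · rintro (⟨_, ⟨x, y, rfl, rfl⟩, rfl⟩ | ⟨_, ⟨x, y, rfl, rfl⟩, rfl⟩)
    · exact ⟨x, y ++ w, by simp, by simp⟩
    · exact ⟨u ++ x, y, by simp, by simp⟩

/-- `C(p_u) ⊆ C(p_v)`. -/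
def ComponentsCoveredBy (φ : A → S) (u v : List A) : Prop :=
  ∀ p, OnPath φ u p → ∃ q, OnPath φ v q ∧ SameSCC φ p q

namespace ComponentsCoveredBy

lemma refl (u : List A) : ComponentsCoveredBy φ u u :=
  fun p hp => ⟨p, hp, .refl p⟩

lemma trans {u v w : List A} (huv : ComponentsCoveredBy φ u v)
    (hvw : ComponentsCoveredBy φ v w) : ComponentsCoveredBy φ u w := by
  intro p hp
  obtain ⟨q, hq, hpq⟩ := huv p hp
  obtain ⟨r, hr, hqr⟩ := hvw q hq
  exact ⟨r, hr, hpq.trans hqr⟩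

lemma append {u v w w' : List A} (huv : ComponentsCoveredBy φ u v)
    (hww' : ComponentsCoveredBy φ w w') (hφuv : phiStar φ u = phiStar φ v)
    (hφww' : phiStar φ w = phiStar φ w') :
    ComponentsCoveredBy φ (u ++ w) (v ++ w') := by
  intro p hp
  rcases onPath_append_iff.mp hp with ⟨q, hq, rfl⟩ | ⟨q, hq, rfl⟩
  · obtain ⟨r, hr, hqr⟩ := huv q hq
    refine ⟨(r.1, r.2 * phiStar φ w'), onPath_append_iff.mpr (.inl ⟨r, hr, rfl⟩), ?_⟩
    simpa only [hφww'] using hqr.mul_right (phiStar φ w')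
  · obtain ⟨r, hr, hqr⟩ := hww' q hq
    refine ⟨(phiStar φ v * r.1, r.2), onPath_append_iff.mpr (.inr ⟨r, hr, rfl⟩), ?_⟩
    simpa only [hφuv] using hqr.mul_left (phiStar φ v)

end ComponentsCoveredBy

lemma sameComponents_iff {u v : List A} :
    SameComponents φ u v ↔ ComponentsCoveredBy φ u v ∧ ComponentsCoveredBy φ v u := by
  refine and_congr Iff.rfl (forall₂_congr fun q _ => exists_congr fun p => ?_)
  exact and_congr Iff.rfl ⟨SameSCC.symm, SameSCC.symm⟩

namespace ConnCong

lemma refl (u : List A) : ConnCong φ u u :=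
  ⟨rfl, sameComponents_iff.mpr ⟨.refl u, .refl u⟩⟩

lemma symm {u v : List A} (h : ConnCong φ u v) : ConnCong φ v u :=
  ⟨h.1.symm, sameComponents_iff.mpr (sameComponents_iff.mp h.2).symm⟩

lemma trans {u v w : List A} (huv : ConnCong φ u v) (hvw : ConnCong φ v w) :
    ConnCong φ u w := by
  obtain ⟨huv₁, huv₂⟩ := sameComponents_iff.mp huv.2
  obtain ⟨hvw₁, hvw₂⟩ := sameComponents_iff.mp hvw.2
  exact ⟨huv.1.trans hvw.1, sameComponents_iff.mpr ⟨huv₁.trans hvw₁, hvw₂.trans huv₂⟩⟩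

lemma append {u v w w' : List A} (huv : ConnCong φ u v) (hww' : ConnCong φ w w') :
    ConnCong φ (u ++ w) (v ++ w') := by
  obtain ⟨huv₁, huv₂⟩ := sameComponents_iff.mp huv.2
  obtain ⟨hww'₁, hww'₂⟩ := sameComponents_iff.mp hww'.2
  refine ⟨by simp only [phiStar_append, huv.1, hww'.1], sameComponents_iff.mpr ⟨?_, ?_⟩⟩
  · exact huv₁.append hww'₁ huv.1 hww'.1
  · exact huv₂.append hww'₂ huv.1.symm hww'.1.symm

end ConnCong

end

theorem connCong_is_congruence_general [Semigroup S]
    (φ : A → S) :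
    (∀ u : List A, u ≠ [] → ConnCong φ u u) ∧
    (∀ u v : List A, u ≠ [] → v ≠ [] → ConnCong φ u v → ConnCong φ v u) ∧
    (∀ u v w : List A, u ≠ [] → v ≠ [] → w ≠ [] →
      ConnCong φ u v → ConnCong φ v w → ConnCong φ u w) ∧
    (∀ u v w : List A, u ≠ [] → v ≠ [] → w ≠ [] → ConnCong φ u v →
      ConnCong φ (u ++ w) (v ++ w) ∧ ConnCong φ (w ++ u) (w ++ v)) :=
  ⟨fun u _ => .refl u,
    fun _ _ _ _ h => h.symm,
    fun _ _ _ _ _ _ huv hvw => huv.trans hvw,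
    fun _ _ w _ _ _ h => ⟨h.append (.refl w), (ConnCong.refl w).append h⟩⟩

/-- The relation `≈_φ` (same image under `φ`, and the canonical paths meet the same strongly
connected components of the two-sided Cayley graph) is a congruence on `A⁺`. -/
theorem connCong_is_congruence [Finite A] [Finite S] [Semigroup S]
    (φ : A → S) (hφ : PlusSurj φ) :
    (∀ u : List A, u ≠ [] → ConnCong φ u u) ∧
    (∀ u v : List A, u ≠ [] → v ≠ [] → ConnCong φ u v → ConnCong φ v u) ∧
    (∀ u v w : List A, u ≠ [] → v ≠ [] → w ≠ [] →
      ConnCong φ u v → ConnCong φ v w → ConnCong φ u w) ∧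
    (∀ u v w : List A, u ≠ [] → v ≠ [] → w ≠ [] → ConnCong φ u v →
      ConnCong φ (u ++ w) (v ++ w) ∧ ConnCong φ (w ++ u) (w ++ v)) :=
  connCong_is_congruence_general φ
end

section
/- Let φ : A⁺ → S and ψ : A⁺ → T be surjective semigroup homomorphisms and f : S → T a homomorphism with f ∘ φ = ψ. If u ≈_φ v (i.e., φ(u) = φ(v) and the paths of u and v in the two-sided Cayley graph of φ meet the same strongly connected components), then u ≈_ψ v. Hence there is a unique surjective homomorphism f^C : A⁺/≈_φ → A⁺/≈_ψ commuting with the quotient maps. -/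
variable {A S : Type*}

/-!
The map `f¹ × f¹ : S¹ × S¹ → T¹ × T¹` sends every path of `Γ_φ` labelled `w` to a path of
`Γ_ψ` with the same label, and it sends the canonical path `p_u` of `Γ_φ` onto the canonical
path `p_u` of `Γ_ψ`. Hence vertices in one strongly connected component of `Γ_φ` go to one
component of `Γ_ψ`, so `C(p_u) = C(p_v)` in `Γ_φ` forces the same in `Γ_ψ`. The map between
the quotients is then the one induced by the inclusion of the two relations.
-/

theorem Quot.existsUnique_surjective_factor {α : Type*} {r s : α → α → Prop}
    (h : ∀ x y, r x y → s x y) :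
    ∃! g : Quot r → Quot s, Function.Surjective g ∧ ∀ x, g (Quot.mk r x) = Quot.mk s x := by
  refine ⟨Quot.factor r s h, ⟨?_, fun _ => rfl⟩, ?_⟩
  · rintro ⟨x⟩
    exact ⟨Quot.mk r x, rfl⟩
  · rintro g ⟨-, hg⟩
    funext x
    induction x using Quot.ind with
    | mk x => exact hg x

section Functoriality

variable {T : Type*} [Semigroup S] [Semigroup T] {φ : A → S} {ψ : A → T} {f : S →ₙ* T}

local notation "f¹" => WithOne.mapMulHom f

theorem phiStar_eq_mapMulHom (hf : ∀ a, ψ a = f (φ a)) (w : List A) :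
    phiStar ψ w = f¹ (phiStar φ w) := by
  simp only [phiStar, map_list_prod, List.map_map]
  congr 1
  ext a
  simp [hf]

theorem HasPath.map (hf : ∀ a, ψ a = f (φ a)) {p q : WithOne S × WithOne S} {w : List A}
    (h : HasPath φ p q w) : HasPath ψ (Prod.map f¹ f¹ p) (Prod.map f¹ f¹ q) w := by
  obtain ⟨h₁, h₂⟩ := h
  constructor
  · simp only [Prod.map_fst, phiStar_eq_mapMulHom hf, ← map_mul, h₁]
  · simp only [Prod.map_snd, phiStar_eq_mapMulHom hf, ← map_mul, h₂]

theorem Reach.map (hf : ∀ a, ψ a = f (φ a)) {p q : WithOne S × WithOne S}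
    (h : Reach φ p q) : Reach ψ (Prod.map f¹ f¹ p) (Prod.map f¹ f¹ q) :=
  let ⟨w, hw⟩ := h
  ⟨w, hw.map hf⟩

theorem SameSCC.map (hf : ∀ a, ψ a = f (φ a)) {p q : WithOne S × WithOne S}
    (h : SameSCC φ p q) : SameSCC ψ (Prod.map f¹ f¹ p) (Prod.map f¹ f¹ q) :=
  ⟨h.1.map hf, h.2.map hf⟩

theorem OnPath.map (hf : ∀ a, ψ a = f (φ a)) {u : List A} {p : WithOne S × WithOne S}
    (h : OnPath φ u p) : OnPath ψ u (Prod.map f¹ f¹ p) := by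
  obtain ⟨u₁, u₂, rfl, rfl⟩ := h
  exact ⟨u₁, u₂, rfl, by simp only [Prod.map, phiStar_eq_mapMulHom hf]⟩

theorem exists_onPath_map_eq (hf : ∀ a, ψ a = f (φ a)) {u : List A}
    {p : WithOne T × WithOne T} (h : OnPath ψ u p) :
    ∃ p', OnPath φ u p' ∧ Prod.map f¹ f¹ p' = p := by
  obtain ⟨u₁, u₂, rfl, rfl⟩ := h
  exact ⟨_, ⟨u₁, u₂, rfl, rfl⟩, by simp only [Prod.map, phiStar_eq_mapMulHom hf]⟩

theorem SameComponents.map (hf : ∀ a, ψ a = f (φ a)) {u v : List A}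
    (h : SameComponents φ u v) : SameComponents ψ u v := by
  constructor
  · intro p hp
    obtain ⟨p', hp', rfl⟩ := exists_onPath_map_eq hf hp
    obtain ⟨q, hq, hpq⟩ := h.1 p' hp'
    exact ⟨_, hq.map hf, hpq.map hf⟩
  · intro q hq
    obtain ⟨q', hq', rfl⟩ := exists_onPath_map_eq hf hq
    obtain ⟨p, hp, hpq⟩ := h.2 q' hq'
    exact ⟨_, hp.map hf, hpq.map hf⟩

theorem ConnCong.map (hf : ∀ a, ψ a = f (φ a)) {u v : List A} (h : ConnCong φ u v) :
    ConnCong ψ u v :=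
  ⟨by rw [phiStar_eq_mapMulHom hf, phiStar_eq_mapMulHom hf, h.1], h.2.map hf⟩

end Functoriality

theorem connCong_functorial_general {T : Type*} [Semigroup S] [Semigroup T]
    (φ : A → S) (ψ : A → T)
    (f : S →ₙ* T) (hf : ∀ a : A, ψ a = f (φ a)) :
    (∀ u v : List A, u ≠ [] → v ≠ [] → ConnCong φ u v → ConnCong ψ u v) ∧
    (∃! g : Quot (fun u v : {w : List A // w ≠ []} => ConnCong φ u.1 v.1) →
            Quot (fun u v : {w : List A // w ≠ []} => ConnCong ψ u.1 v.1),
      Function.Surjective g ∧ ∀ u : {w : List A // w ≠ []},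
        g (Quot.mk _ u) = Quot.mk _ u) :=
  ⟨fun _ _ _ _ h => h.map hf,
    Quot.existsUnique_surjective_factor fun _ _ h => h.map hf⟩

/-- If `f ∘ φ = ψ` then `u ≈_φ v` implies `u ≈_ψ v`; hence there is a unique surjective map
between the quotients commuting with the quotient maps. -/
theorem connCong_functorial {T : Type*} [Semigroup S] [Semigroup T]
    (φ : A → S) (ψ : A → T) (hφ : PlusSurj φ) (hψ : PlusSurj ψ)
    (f : S →ₙ* T) (hf : ∀ a : A, ψ a = f (φ a)) :
    (∀ u v : List A, u ≠ [] → v ≠ [] → ConnCong φ u v → ConnCong ψ u v) ∧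
    (∃! g : Quot (fun u v : {w : List A // w ≠ []} => ConnCong φ u.1 v.1) →
            Quot (fun u v : {w : List A // w ≠ []} => ConnCong ψ u.1 v.1),
      Function.Surjective g ∧ ∀ u : {w : List A // w ≠ []},
        g (Quot.mk _ u) = Quot.mk _ u) :=
  connCong_functorial_general φ ψ f hf
end

section
/- Let S be a finite semigroup that is a local group (for every idempotent e ∈ S, the monoid eSe is a group). If w ∈ S can be written w = w₁ e w₃ with e idempotent, then for every a ∈ S there exists t ∈ S such that w = w a t. -/
/-- A finite semigroup is a local group if `eSe` is a group (with identity `e`)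
for every idempotent `e`. -/
def IsLocalGroup (S : Type*) [Semigroup S] : Prop :=
  ∀ e : S, e * e = e → ∀ s : S,
    ∃ y : S, e * y * e = y ∧ (e * s * e) * y = e ∧ y * (e * s * e) = e

/-- In a finite local group, if `w` factors as `w = w₁ e w₃` with `e` idempotent
(`w₁, w₃` possibly empty), then for every `a` there exists `t` with `w = w a t`. -/
theorem localGroup_absorption {S : Type*} [Semigroup S] [Finite S]
    (hLG : IsLocalGroup S) (w a : S)
    (h : ∃ (w₁ w₃ : WithOne S) (e : S), e * e = e ∧
      (w : WithOne S) = w₁ * (e : WithOne S) * w₃) :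
    ∃ t : S, w = w * a * t := by
  obtain ⟨w₁, w₃, e, he, hw⟩ := h
  -- w₃ * a is a genuine element of S
  obtain ⟨s, hs⟩ : ∃ s : S, w₃ * (a : WithOne S) = (s : WithOne S) := by
    induction w₃ using WithOne.recOneCoe with
    | one => exact ⟨a, one_mul _⟩
    | coe c => exact ⟨c * a, (WithOne.coe_mul c a).symm⟩
  obtain ⟨y, hy1, hy2, _⟩ := hLG e he s
  -- y * w₃ is a genuine element of S
  obtain ⟨t, ht⟩ : ∃ t : S, (y : WithOne S) * w₃ = (t : WithOne S) := by
    induction w₃ using WithOne.recOneCoe with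
    | one => exact ⟨y, mul_one _⟩
    | coe c => exact ⟨y * c, (WithOne.coe_mul y c).symm⟩
  have key : e * s * y = e := by
    conv_lhs => rw [← hy1]
    calc e * s * (e * y * e) = (e * s * e) * y * e := by
          simp only [mul_assoc]
      _ = e := by rw [hy2, he]
  refine ⟨t, ?_⟩
  apply WithOne.coe_inj.mp
  push_cast
  rw [hw, ← ht]
  symm
  calc (w₁ * e * w₃) * a * (y * w₃)
      = w₁ * (e * ((w₃ * a) * y)) * w₃ := by simp only [mul_assoc]
    _ = w₁ * (e : WithOne S) * w₃ := by
        rw [hs, show (e : WithOne S) * (s * y) = e from by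
          rw [← mul_assoc, ← WithOne.coe_mul, ← WithOne.coe_mul, key]]
end

section
/- In any finite semigroup S belonging to LG (every local monoid eSe with e idempotent is a group), the identity w₁ w₂^ω w₃ = w₁ (w₂^ω w₃ a w₂^ω)^ω w₃ holds for all w₁, w₂, w₃, a ∈ S (with w₁, w₃ possibly empty, i.e., in S¹). -/
theorem eq_of_isIdempotentElem_of_mul_eq {M : Type*} [Monoid M] {f e g : M}
    (hf : IsIdempotentElem f) (hfe : f * e = f) (hfg : f * g = e) : f = e :=
  calc f = f * (f * g) := by rw [hfg, hfe]
    _ = e := by rw [← mul_assoc, hf.eq, hfg]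

theorem pow_succ_mul_pow_succ_of_mul_eq {M : Type*} [Monoid M] {t y e : M}
    (hty : t * y = e) (hte : t * e = t) (n : ℕ) : t ^ (n + 1) * y ^ (n + 1) = e := by
  induction n with
  | zero => simpa using hty
  | succ n ih =>
    calc t ^ (n + 1 + 1) * y ^ (n + 1 + 1) = t ^ (n + 1) * (t * y) * y ^ (n + 1) := by
          rw [pow_succ t, pow_succ' y, mul_assoc, mul_assoc, mul_assoc]
      _ = e := by rw [hty, pow_succ, mul_assoc (t ^ n), hte, ← pow_succ, ih]

theorem pow_eq_of_isIdempotentElem_pow {M : Type*} [Monoid M] {t y e : M}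
    (hty : t * y = e) (hte : t * e = t) {n : ℕ} (hn : n ≠ 0)
    (hidem : IsIdempotentElem (t ^ n)) : t ^ n = e := by
  obtain ⟨m, rfl⟩ := Nat.exists_eq_succ_of_ne_zero hn
  exact eq_of_isIdempotentElem_of_mul_eq hidem (by rw [pow_succ, mul_assoc, hte])
    (pow_succ_mul_pow_succ_of_mul_eq hty hte m)

theorem WithOne.exists_coe_mul_mul_coe_eq {S : Type*} [Semigroup S] {e : S} (he : e * e = e)
    (x : WithOne S) : ∃ s : S, (e : WithOne S) * x * e = ↑(e * s * e) := by
  cases x with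
  | one => exact ⟨e, by rw [mul_one, ← WithOne.coe_mul, he, he]⟩
  | coe s => exact ⟨s, by simp only [WithOne.coe_mul]⟩

theorem IsLocalGroup.pow_eq_coe_of_isIdempotentElem {S : Type*} [Semigroup S]
    (hLG : IsLocalGroup S) {e : S} (he : e * e = e) (x : WithOne S) {n : ℕ} (hn : n ≠ 0)
    (hidem : IsIdempotentElem (((e : WithOne S) * x * e) ^ n)) :
    ((e : WithOne S) * x * e) ^ n = e := by
  obtain ⟨s, hs⟩ := WithOne.exists_coe_mul_mul_coe_eq he x
  obtain ⟨y, -, hy, -⟩ := hLG e he s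
  rw [hs] at hidem ⊢
  refine pow_eq_of_isIdempotentElem_pow (y := (y : WithOne S)) ?_ ?_ hn hidem
  · rw [← WithOne.coe_mul, hy]
  · rw [← WithOne.coe_mul, mul_assoc _ e e, he]

theorem localGroup_omega_identity_general {S : Type*} [Semigroup S]
    (hLG : IsLocalGroup S) (w₁ w₃ : WithOne S) (w₂ a : S) (e : S) (f : WithOne S)
    (he : (∃ n : ℕ, 1 ≤ n ∧ ((w₂ : WithOne S)) ^ n = (e : WithOne S)) ∧ e * e = e)
    (hf : (∃ n : ℕ, 1 ≤ n ∧
        ((e : WithOne S) * w₃ * (a : WithOne S) * (e : WithOne S)) ^ n = f) ∧ f * f = f) :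
    w₁ * (e : WithOne S) * w₃ = w₁ * f * w₃ := by
  obtain ⟨⟨n, hn, rfl⟩, hff⟩ := hf
  have hsandwich : (e : WithOne S) * w₃ * a * e = e * (w₃ * a) * e := by
    simp only [mul_assoc]
  rw [hsandwich] at hff ⊢
  rw [hLG.pow_eq_coe_of_isIdempotentElem he.2 _ (by omega) hff]

/-- In a finite local group `S`, the identity `w₁ w₂^ω w₃ = w₁ (w₂^ω w₃ a w₂^ω)^ω w₃`
holds, where `w₁, w₃` range over `S¹`, `s^ω` denotes the idempotent power. -/
theorem localGroup_omega_identity {S : Type*} [Semigroup S] [Finite S]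
    (hLG : IsLocalGroup S) (w₁ w₃ : WithOne S) (w₂ a : S) (e : S) (f : WithOne S)
    (he : (∃ n : ℕ, 1 ≤ n ∧ ((w₂ : WithOne S)) ^ n = (e : WithOne S)) ∧ e * e = e)
    (hf : (∃ n : ℕ, 1 ≤ n ∧
        ((e : WithOne S) * w₃ * (a : WithOne S) * (e : WithOne S)) ^ n = f) ∧ f * f = f) :
    w₁ * (e : WithOne S) * w₃ = w₁ * f * w₃ :=
  localGroup_omega_identity_general hLG w₁ w₃ w₂ a e f he hf
end

section
/- Let S be a compact topological semigroup given as the inverse limit of an inverse system of finite semigroups Sₙ with surjective continuous connecting homomorphisms π_{m,n} : S_m → S_n (m ≥ n) indexed by natural numbers, with projections πₙ : S → Sₙ. Suppose u,v,x,y ∈ S are such that for every n there exists tₙ ∈ Sₙ¹ with πₙ(u)tₙ = πₙ(x) and πₙ(v) = tₙπₙ(y). Then there exists t ∈ S¹ with ut = x and v = ty. -/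
/-!
The sets of witnesses `tₙ ∈ Sₙ¹` are finite, nonempty, and mapped into each other by the
connecting homomorphisms, so by compactness (Kőnig's lemma, via an ultrafilter) they contain a
compatible family. Adjoining an identity commutes with the inverse limit, so this family is the
image of one `t ∈ S¹`, and since the projections separate points of `S¹`, `t` is a witness.
-/

open Filter WithOne

instance WithOne.finite {α : Type*} [Finite α] : Finite (WithOne α) :=
  inferInstanceAs (Finite (Option α))

theorem exists_compatible_family_of_finite {T : ℕ → Type*} [∀ n, Finite (T n)] [∀ n, Nonempty (T n)]
    (f : ∀ m n, n ≤ m → T m → T n)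
    (hf : ∀ k m n (h₁ : m ≤ k) (h₂ : n ≤ m) (t : T k),
      f m n h₂ (f k m h₁ t) = f k n (h₂.trans h₁) t) :
    ∃ a : ∀ n, T n, ∀ m n (h : n ≤ m), f m n h (a m) = a n := by
  let U : Ultrafilter ℕ := hyperfilter ℕ
  let t : ∀ n, T n := fun _ => Classical.arbitrary _
  have hlim : ∀ n, ∃ a, ∀ᶠ j in U, ∃ h : n ≤ j, f j n h (t j) = a := fun n =>
    Ultrafilter.eventually_exists_iff.mp <|
      ((eventually_ge_atTop n).filter_mono Nat.hyperfilter_le_atTop).mono fun j h => ⟨_, h, rfl⟩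
  choose a ha using hlim
  refine ⟨a, fun m n h => ?_⟩
  obtain ⟨j, ⟨hmj, hm⟩, ⟨hnj, hn⟩⟩ := ((ha m).and (ha n)).exists
  rw [← hm, ← hn]
  exact hf j m n hmj h (t j)

theorem WithOne.mapMulHom_eq_one_iff {α β : Type*} [Mul α] [Mul β] {f : α →ₙ* β}
    {a : WithOne α} : mapMulHom f a = 1 ↔ a = 1 := by
  induction a <;> simp [coe_ne_one]

theorem WithOne.mapMulHom_coe_mul_eq_and_eq_mul_coe {α β : Type*} [Mul α] [Mul β] (f : α →ₙ* β)
    {u v x y : α} {t : WithOne α}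
    (h : (u : WithOne α) * t = x ∧ (v : WithOne α) = t * y) :
    (f u : WithOne β) * mapMulHom f t = f x ∧ (f v : WithOne β) = mapMulHom f t * f y := by
  simpa only [map_mul, mapMulHom_coe] using
    And.intro (congrArg (mapMulHom f) h.1) (congrArg (mapMulHom f) h.2)

theorem WithOne.eq_of_forall_mapMulHom_eq {ι α : Type*} {β : ι → Type*} [Nonempty ι] [Mul α]
    [∀ i, Mul (β i)] {f : ∀ i, α →ₙ* β i} (hf : ∀ a b, (∀ i, f i a = f i b) → a = b)
    {a b : WithOne α} (h : ∀ i, mapMulHom (f i) a = mapMulHom (f i) b) : a = b := by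
  induction a <;> induction b
  · rfl
  · simpa [eq_comm] using h (Classical.arbitrary ι)
  · simpa using h (Classical.arbitrary ι)
  · exact congrArg _ (hf _ _ fun i => coe_inj.mp (h i))

theorem WithOne.exists_mapMulHom_eq_of_compatible {S : Type*} {Sn : ℕ → Type*} [Mul S]
    [∀ n, Mul (Sn n)] {π : ∀ m n, n ≤ m → Sn m →ₙ* Sn n} {p : ∀ n, S →ₙ* Sn n}
    (hlim : ∀ f : ∀ n, Sn n, (∀ m n (h : n ≤ m), π m n h (f m) = f n) →
      ∃ s : S, ∀ n, p n s = f n)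
    {a : ∀ n, WithOne (Sn n)} (ha : ∀ m n (h : n ≤ m), mapMulHom (π m n h) (a m) = a n) :
    ∃ t : WithOne S, ∀ n, mapMulHom (p n) t = a n := by
  by_cases h₀ : a 0 = 1
  · refine ⟨1, fun n => ?_⟩
    rw [map_one, eq_comm, ← mapMulHom_eq_one_iff (f := π n 0 n.zero_le), ha, h₀]
  · have hne : ∀ n, a n ≠ 1 := fun n h => h₀ <| by
      rw [← ha n 0 n.zero_le, h, map_one]
    choose b hb using fun n => ne_one_iff_exists.mp (hne n)
    obtain ⟨s, hs⟩ := hlim b fun m n h => coe_inj.mp <| by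
      rw [← mapMulHom_coe, hb, hb, ha]
    exact ⟨s, fun n => by rw [mapMulHom_coe, hs, hb]⟩

theorem inverse_limit_divisibility_general {S : Type*} [Semigroup S]
    (Sn : ℕ → Type*) [∀ n, Semigroup (Sn n)] [∀ n, Finite (Sn n)]
    (π : ∀ m n, n ≤ m → (Sn m →ₙ* Sn n))
    (hππ : ∀ k m n (h1 : m ≤ k) (h2 : n ≤ m) (s : Sn k),
      π m n h2 (π k m h1 s) = π k n (h2.trans h1) s)
    (p : ∀ n, S →ₙ* Sn n)
    (hcomp : ∀ m n (h : n ≤ m) (s : S), π m n h (p m s) = p n s)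
    (hsep : ∀ s s' : S, (∀ n, p n s = p n s') → s = s')
    (hlim : ∀ f : ∀ n, Sn n, (∀ m n (h : n ≤ m), π m n h (f m) = f n) →
      ∃ s : S, ∀ n, p n s = f n)
    (u v x y : S)
    (ht : ∀ n, ∃ t : WithOne (Sn n),
      (p n u : WithOne (Sn n)) * t = (p n x : WithOne (Sn n)) ∧
      (p n v : WithOne (Sn n)) = t * (p n y : WithOne (Sn n))) :
    ∃ t : WithOne S, (u : WithOne S) * t = (x : WithOne S) ∧
      (v : WithOne S) = t * (y : WithOne S) := by
  let W n := {t : WithOne (Sn n) //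
    (p n u : WithOne (Sn n)) * t = p n x ∧ (p n v : WithOne (Sn n)) = t * p n y}
  have : ∀ n, Nonempty (W n) := fun n => nonempty_subtype.mpr (ht n)
  obtain ⟨a, ha⟩ := exists_compatible_family_of_finite (T := W)
    (fun m n h t => ⟨mapMulHom (π m n h) t.1, by
      simpa only [hcomp] using mapMulHom_coe_mul_eq_and_eq_mul_coe (π m n h) t.2⟩)
    fun k m n h₁ h₂ t => Subtype.ext <| by
      dsimp only
      rw [mapMulHom_mapMulHom,
        show (π m n h₂).comp (π k m h₁) = π k n (h₂.trans h₁) from MulHom.ext (hππ k m n h₁ h₂)]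
  obtain ⟨t, hpt⟩ := exists_mapMulHom_eq_of_compatible hlim (a := fun n => (a n).1)
    fun m n h => congrArg Subtype.val (ha m n h)
  refine ⟨t, eq_of_forall_mapMulHom_eq hsep fun n => ?_,
    eq_of_forall_mapMulHom_eq hsep fun n => ?_⟩
  · rw [map_mul, hpt, mapMulHom_coe, mapMulHom_coe]
    exact (a n).2.1
  · rw [map_mul, hpt, mapMulHom_coe, mapMulHom_coe]
    exact (a n).2.2

/-- Let `S` be the inverse limit of an inverse system of finite semigroups `Sn` with
surjective connecting homomorphisms, with projections `p n` which are jointly injective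
and through which every compatible family factors. If for every `n` there is
`tₙ ∈ Sₙ¹` with `pₙ(u)tₙ = pₙ(x)` and `pₙ(v) = tₙpₙ(y)`, then there is `t ∈ S¹` with
`ut = x` and `v = ty`. -/
theorem inverse_limit_divisibility {S : Type*} [Semigroup S]
    (Sn : ℕ → Type*) [∀ n, Semigroup (Sn n)] [∀ n, Finite (Sn n)]
    (π : ∀ m n, n ≤ m → (Sn m →ₙ* Sn n))
    (hπsurj : ∀ m n (h : n ≤ m), Function.Surjective (π m n h))
    (hππ : ∀ k m n (h1 : m ≤ k) (h2 : n ≤ m) (s : Sn k),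
      π m n h2 (π k m h1 s) = π k n (h2.trans h1) s)
    (p : ∀ n, S →ₙ* Sn n)
    (hpsurj : ∀ n, Function.Surjective (p n))
    (hcomp : ∀ m n (h : n ≤ m) (s : S), π m n h (p m s) = p n s)
    (hsep : ∀ s s' : S, (∀ n, p n s = p n s') → s = s')
    (hlim : ∀ f : ∀ n, Sn n, (∀ m n (h : n ≤ m), π m n h (f m) = f n) →
      ∃ s : S, ∀ n, p n s = f n)
    (u v x y : S)
    (ht : ∀ n, ∃ t : WithOne (Sn n),
      (p n u : WithOne (Sn n)) * t = (p n x : WithOne (Sn n)) ∧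
      (p n v : WithOne (Sn n)) = t * (p n y : WithOne (Sn n))) :
    ∃ t : WithOne S, (u : WithOne S) * t = (x : WithOne S) ∧
      (v : WithOne S) = t * (y : WithOne S) :=
  inverse_limit_divisibility_general Sn π hππ p hcomp hsep hlim u v x y ht
end

section
/- Let S be a compact semigroup and suppose u,v,x,y ∈ S satisfy uv = xy. Suppose that for every continuous homomorphism π from S onto a finite semigroup, either there exists t with π(u)t = π(x) and π(v) = tπ(y), or there exists τ with π(x)τ = π(u) and π(y) = τπ(v) (t, τ ranging over the image with adjoined identity). If S is residually finite as a topological semigroup (continuous homomorphisms to finite semigroups separate points) and S is an inverse limit of a countable inverse system of finite semigroups, then there exists t ∈ S¹ with ut = x and v = ty, or there exists τ ∈ S¹ with xτ = u and y = τv. -/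
/-!
For a finite quotient `q`, the elements `t ∈ S` with `q(ut) = q(x)` and `q(v) = q(ty)` form a
closed set. If no `t ∈ S¹` works in `S`, residual finiteness makes the intersection of these
sets empty, so by compactness finitely many quotients, together with one separating `(u, v)`
from `(x, y)`, already exclude every `t`; their common refinement is then not of the first
type. Being of a type passes from a quotient to any coarser one, so if both types failed in
`S`, the product of the two quotients obtained would be of neither type.
-/

/-- A continuous surjective homomorphism from `S` onto a finite semigroup. -/
structure FinQuot (S : Type*) [Semigroup S] [TopologicalSpace S] where
  T : Type
  [sg : Semigroup T]
  [fin : Finite T]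
  [ts : TopologicalSpace T]
  [disc : DiscreteTopology T]
  f : S → T
  surj : Function.Surjective f
  cont : Continuous f
  map_mul : ∀ a b : S, f (a * b) = f a * f b

attribute [instance] FinQuot.sg FinQuot.fin FinQuot.ts FinQuot.disc

lemma WithOne.exists_mul_eq_and_eq_mul_iff {T : Type*} [Mul T] {a b c d : T} :
    (∃ t : WithOne T, (a : WithOne T) * t = c ∧ (b : WithOne T) = t * d) ↔
      (a = c ∧ b = d) ∨ ∃ t : T, a * t = c ∧ b = t * d := by
  constructor
  · rintro ⟨t, h₁, h₂⟩
    induction t using WithOne.recOneCoe with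
    | one => exact .inl ⟨by simpa using h₁, by simpa using h₂⟩
    | coe t =>
      norm_cast at h₁ h₂
      exact .inr ⟨t, h₁, h₂⟩
  · rintro (⟨rfl, rfl⟩ | ⟨t, rfl, rfl⟩)
    · exact ⟨1, mul_one _, (one_mul _).symm⟩
    · exact ⟨t, rfl, rfl⟩

namespace FinQuot

variable {S : Type*} [Semigroup S] [TopologicalSpace S]

def toMulHom (q : FinQuot S) : S →ₙ* q.T := ⟨q.f, q.map_mul⟩

/-- `Q.Refines q`: `q.f` factors through `Q.f`. -/
def Refines (Q q : FinQuot S) : Prop := ∀ s s' : S, Q.f s = Q.f s' → q.f s = q.f s'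

def prod (q₁ q₂ : FinQuot S) : FinQuot S where
  T := (q₁.toMulHom.prod q₂.toMulHom).srange
  f := (q₁.toMulHom.prod q₂.toMulHom).srangeRestrict
  surj := MulHom.srangeRestrict_surjective _
  cont := (q₁.cont.prodMk q₂.cont).subtype_mk _
  map_mul := _root_.map_mul _

lemma prod_f_eq_iff (q₁ q₂ : FinQuot S) {s s' : S} :
    (q₁.prod q₂).f s = (q₁.prod q₂).f s' ↔ q₁.f s = q₁.f s' ∧ q₂.f s = q₂.f s' :=
  Subtype.ext_iff.trans Prod.ext_iff

lemma prod_refines_left (q₁ q₂ : FinQuot S) : (q₁.prod q₂).Refines q₁ :=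
  fun _ _ h => ((q₁.prod_f_eq_iff q₂).1 h).1

lemma prod_refines_right (q₁ q₂ : FinQuot S) : (q₁.prod q₂).Refines q₂ :=
  fun _ _ h => ((q₁.prod_f_eq_iff q₂).1 h).2

lemma exists_common_refinement (q₀ : FinQuot S) (F : Finset (FinQuot S)) :
    ∃ Q : FinQuot S, Q.Refines q₀ ∧ ∀ q ∈ F, Q.Refines q := by
  classical
  induction F using Finset.induction_on with
  | empty => exact ⟨q₀, fun _ _ => id, by simp⟩
  | insert q F _ ih =>
    obtain ⟨Q, hQ₀, hQF⟩ := ih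
    refine ⟨Q.prod q, fun s s' h => hQ₀ s s' (Q.prod_refines_left q s s' h), ?_⟩
    rintro r hr
    rcases Finset.mem_insert.1 hr with rfl | hr
    · exact Q.prod_refines_right r
    · exact fun s s' h => hQF r hr s s' (Q.prod_refines_left q s s' h)

lemma eq_of_forall_f_eq (hsep : ∀ s s' : S, s ≠ s' → ∃ q : FinQuot S, q.f s ≠ q.f s')
    {s s' : S} (h : ∀ q : FinQuot S, q.f s = q.f s') : s = s' := by
  by_contra hne
  obtain ⟨q, hq⟩ := hsep s s' hne
  exact hq (h q)

def transferSet (q : FinQuot S) (u v x y : S) : Set S :=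
  {t | q.f (u * t) = q.f x ∧ q.f v = q.f (t * y)}

lemma isClosed_transferSet [ContinuousMul S] (q : FinQuot S) (u v x y : S) :
    IsClosed (q.transferSet u v x y) :=
  (isClosed_eq (q.cont.comp (continuous_const_mul u)) continuous_const).inter
    (isClosed_eq continuous_const (q.cont.comp (continuous_mul_const y)))

/-- The paper's second type for `u v = x y` is `q.IsFirstType x y u v`. -/
def IsFirstType (q : FinQuot S) (u v x y : S) : Prop :=
  ∃ t : WithOne q.T, (q.f u : WithOne q.T) * t = q.f x ∧ (q.f v : WithOne q.T) = t * q.f y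

lemma isFirstType_iff {q : FinQuot S} {u v x y : S} :
    q.IsFirstType u v x y ↔
      (q.f u = q.f x ∧ q.f v = q.f y) ∨ (q.transferSet u v x y).Nonempty := by
  rw [IsFirstType, WithOne.exists_mul_eq_and_eq_mul_iff, q.surj.exists]
  simp only [transferSet, Set.Nonempty, Set.mem_ofPred_eq, q.map_mul]

lemma Refines.transferSet_subset {Q q : FinQuot S} (hQ : Q.Refines q) (u v x y : S) :
    Q.transferSet u v x y ⊆ q.transferSet u v x y :=
  fun _ ht => ⟨hQ _ _ ht.1, hQ _ _ ht.2⟩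

lemma IsFirstType.of_refines {Q q : FinQuot S} {u v x y : S} (hQ : Q.Refines q)
    (h : Q.IsFirstType u v x y) : q.IsFirstType u v x y := by
  rw [isFirstType_iff] at h ⊢
  rcases h with ⟨hux, hvy⟩ | hne
  · exact .inl ⟨hQ _ _ hux, hQ _ _ hvy⟩
  · exact .inr (hne.mono (hQ.transferSet_subset u v x y))

lemma exists_not_isFirstType [CompactSpace S] [ContinuousMul S]
    (hsep : ∀ s s' : S, s ≠ s' → ∃ q : FinQuot S, q.f s ≠ q.f s') {u v x y : S}
    (h : ¬∃ t : WithOne S, (u : WithOne S) * t = x ∧ (v : WithOne S) = t * y) :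
    ∃ q : FinQuot S, ¬q.IsFirstType u v x y := by
  rw [WithOne.exists_mul_eq_and_eq_mul_iff, not_or] at h
  obtain ⟨hne, hnone⟩ := h
  obtain ⟨q₀, hq₀⟩ : ∃ q₀ : FinQuot S, ¬(q₀.f u = q₀.f x ∧ q₀.f v = q₀.f y) :=
    not_forall.1 fun h₀ =>
      hne ⟨eq_of_forall_f_eq hsep fun q => (h₀ q).1, eq_of_forall_f_eq hsep fun q => (h₀ q).2⟩
  have hempty : Set.univ ∩ ⋂ q : FinQuot S, q.transferSet u v x y = ∅ := by
    refine Set.eq_empty_iff_forall_notMem.2 fun t ⟨_, ht⟩ => hnone ⟨t, ?_, ?_⟩ <;>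
      rw [Set.mem_iInter] at ht
    · exact eq_of_forall_f_eq hsep fun q => (ht q).1
    · exact eq_of_forall_f_eq hsep fun q => (ht q).2
  obtain ⟨F, hF⟩ := isCompact_univ.elim_finite_subfamily_closed _
    (fun q => q.isClosed_transferSet u v x y) hempty
  obtain ⟨Q, hQ₀, hQF⟩ := exists_common_refinement q₀ F
  refine ⟨Q, fun hQ => ?_⟩
  rcases isFirstType_iff.1 hQ with ⟨hux, hvy⟩ | ⟨t, ht⟩
  · exact hq₀ ⟨hQ₀ _ _ hux, hQ₀ _ _ hvy⟩
  · exact hF.subset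
      ⟨trivial, Set.mem_iInter₂.2 fun q hq => (hQF q hq).transferSet_subset _ _ _ _ ht⟩

end FinQuot

theorem equidivisibility_from_finite_quotients_general {S : Type*} [Semigroup S]
    [TopologicalSpace S] [CompactSpace S] [ContinuousMul S]
    (hsep : ∀ s s' : S, s ≠ s' → ∃ q : FinQuot S, q.f s ≠ q.f s')
    (u v x y : S)
    (htype : ∀ q : FinQuot S,
      (∃ t : WithOne q.T, (q.f u : WithOne q.T) * t = (q.f x : WithOne q.T) ∧
        (q.f v : WithOne q.T) = t * (q.f y : WithOne q.T)) ∨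
      (∃ τ : WithOne q.T, (q.f x : WithOne q.T) * τ = (q.f u : WithOne q.T) ∧
        (q.f y : WithOne q.T) = τ * (q.f v : WithOne q.T))) :
    (∃ t : WithOne S, (u : WithOne S) * t = (x : WithOne S) ∧
      (v : WithOne S) = t * (y : WithOne S)) ∨
    (∃ τ : WithOne S, (x : WithOne S) * τ = (u : WithOne S) ∧
      (y : WithOne S) = τ * (v : WithOne S)) := by
  by_contra h
  rw [not_or] at h
  obtain ⟨q₁, hq₁⟩ := FinQuot.exists_not_isFirstType hsep h.1
  obtain ⟨q₂, hq₂⟩ := FinQuot.exists_not_isFirstType hsep h.2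
  rcases htype (q₁.prod q₂) with h₁ | h₂
  · exact hq₁ (FinQuot.IsFirstType.of_refines (q₁.prod_refines_left q₂) h₁)
  · exact hq₂ (FinQuot.IsFirstType.of_refines (q₁.prod_refines_right q₂) h₂)

/-- Let `S` be a compact topological semigroup, residually finite (continuous homomorphisms
onto finite semigroups separate points), realized as the inverse limit of a countable
inverse system of finite (discrete) semigroups. If `uv = xy` and every continuous
homomorphism onto a finite semigroup is of the first or of the second type, then there is
`t ∈ S¹` with `ut = x` and `v = ty`, or `τ ∈ S¹` with `xτ = u` and `y = τv`. -/
theorem equidivisibility_from_finite_quotients {S : Type*} [Semigroup S]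
    [TopologicalSpace S] [CompactSpace S] [ContinuousMul S]
    (Sn : ℕ → Type) [∀ n, Semigroup (Sn n)] [∀ n, Finite (Sn n)]
    [∀ n, TopologicalSpace (Sn n)] [∀ n, DiscreteTopology (Sn n)]
    (π : ∀ m n, n ≤ m → (Sn m →ₙ* Sn n))
    (hπsurj : ∀ m n (h : n ≤ m), Function.Surjective (π m n h))
    (hππ : ∀ k m n (h1 : m ≤ k) (h2 : n ≤ m) (s : Sn k),
      π m n h2 (π k m h1 s) = π k n (h2.trans h1) s)
    (p : ∀ n, S →ₙ* Sn n)
    (hpc : ∀ n, Continuous (p n))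
    (hpsurj : ∀ n, Function.Surjective (p n))
    (hcomp : ∀ m n (h : n ≤ m) (s : S), π m n h (p m s) = p n s)
    (hsep : ∀ s s' : S, s ≠ s' → ∃ q : FinQuot S, q.f s ≠ q.f s')
    (hlim : ∀ f : ∀ n, Sn n, (∀ m n (h : n ≤ m), π m n h (f m) = f n) →
      ∃ s : S, ∀ n, p n s = f n)
    (u v x y : S) (huv : u * v = x * y)
    (htype : ∀ q : FinQuot S,
      (∃ t : WithOne q.T, (q.f u : WithOne q.T) * t = (q.f x : WithOne q.T) ∧
        (q.f v : WithOne q.T) = t * (q.f y : WithOne q.T)) ∨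
      (∃ τ : WithOne q.T, (q.f x : WithOne q.T) * τ = (q.f u : WithOne q.T) ∧
        (q.f y : WithOne q.T) = τ * (q.f v : WithOne q.T))) :
    (∃ t : WithOne S, (u : WithOne S) * t = (x : WithOne S) ∧
      (v : WithOne S) = t * (y : WithOne S)) ∨
    (∃ τ : WithOne S, (x : WithOne S) * τ = (u : WithOne S) ∧
      (y : WithOne S) = τ * (v : WithOne S)) :=
  equidivisibility_from_finite_quotients_general hsep u v x y htype
end

section
/- Let θ : B⁺ → A⁺ be a homomorphism with θ(B) = A, φ : A⁺ → S surjective, ψ = φ ∘ θ. Define the two-sided Karnofsky–Rhodes congruence ≡_χ on X⁺ (for χ : X⁺ → S) by u ≡_χ v iff χ(u) = χ(v) and the paths p_u, p_v in Γ_χ traverse the same set of transition edges. Then u ≡_ψ v implies θ(u) ≡_φ θ(v), and hence the Karnofsky–Rhodes expansion of S with respect to φ is a homomorphic image of the one with respect to ψ. -/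
/-! A letter-to-letter substitution `θ` with `θ(B) = A` does not change the Cayley graph: `Γ_{φ∘θ}`
and `Γ_φ` have the same vertices, the path `p_u` of `u ∈ B⁺` runs through the same vertices as
`p_{θ(u)}`, and since every word over `A` lifts along `θ`, both graphs have the same reachability
relation, hence the same strongly connected components. So the transition edges of `p_{θ(u)}` are
exactly the relabelled transition edges of `p_u`, and `≡_{φ∘θ}` maps into `≡_φ`; surjectivity of the
induced map on expansions is again the lifting of words along `θ`. -/

variable {A S : Type*}

section LetterSubstitution

variable {B : Type*} [Semigroup S] (θ : B → A) (φ : A → S)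

lemma phiStar_map (u : List B) : phiStar φ (u.map θ) = phiStar (φ ∘ θ) u := by
  simp [phiStar, Function.comp_def]

lemma hasPath_comp_iff (p q : WithOne S × WithOne S) (w : List B) :
    HasPath (φ ∘ θ) p q w ↔ HasPath φ p q (w.map θ) := by
  simp only [HasPath, phiStar_map]

variable {θ}

lemma reach_comp_iff (hθ : Function.Surjective θ) (p q : WithOne S × WithOne S) :
    Reach (φ ∘ θ) p q ↔ Reach φ p q := by
  simp only [Reach, hasPath_comp_iff, (List.map_surjective_iff.2 hθ).exists]

lemma sameSCC_comp_iff (hθ : Function.Surjective θ) (p q : WithOne S × WithOne S) :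
    SameSCC (φ ∘ θ) p q ↔ SameSCC φ p q := by
  simp only [SameSCC, reach_comp_iff φ hθ]

variable (θ)

lemma edgeOfPath_map_iff (u : List B) (p q : WithOne S × WithOne S) (a : A) :
    EdgeOfPath φ (u.map θ) (p, a, q) ↔ ∃ b, θ b = a ∧ EdgeOfPath (φ ∘ θ) u (p, b, q) := by
  simp only [EdgeOfPath]
  constructor
  · rintro ⟨u₁, u₂, hu, rfl, rfl⟩
    obtain ⟨w₁, w, rfl, rfl, hw⟩ := List.map_eq_append_iff.1 hu
    obtain ⟨b, w₂, rfl, rfl, rfl⟩ := List.map_eq_cons_iff.1 hw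
    refine ⟨b, rfl, w₁, w₂, rfl, ?_, ?_⟩ <;>
      simp only [← phiStar_map, List.map_cons, List.map_append, List.map_nil]
  · rintro ⟨b, rfl, w₁, w₂, rfl, rfl, rfl⟩
    refine ⟨w₁.map θ, w₂.map θ, by simp, ?_, ?_⟩ <;>
      simp only [← phiStar_map, List.map_cons, List.map_append, List.map_nil]

variable {θ}

lemma isTransitionOfPath_map_iff (hθ : Function.Surjective θ) (u : List B)
    (p q : WithOne S × WithOne S) (a : A) :
    IsTransitionOfPath φ (u.map θ) (p, a, q) ↔
      ∃ b, θ b = a ∧ IsTransitionOfPath (φ ∘ θ) u (p, b, q) := by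
  simp only [IsTransitionOfPath, edgeOfPath_map_iff, sameSCC_comp_iff φ hθ, ← exists_and_right,
    and_assoc]

lemma KRCong.map (hθ : Function.Surjective θ) {u v : List B} (h : KRCong (φ ∘ θ) u v) :
    KRCong φ (u.map θ) (v.map θ) := by
  refine ⟨by simpa only [phiStar_map] using h.1, ?_⟩
  rintro ⟨p, a, q⟩
  simp only [isTransitionOfPath_map_iff φ hθ, h.2]

end LetterSubstitution

def mapNonempty {B : Type*} (θ : B → A) (u : {w : List B // w ≠ []}) : {w : List A // w ≠ []} :=
  ⟨u.1.map θ, by simpa using u.2⟩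

lemma mapNonempty_surjective {B : Type*} {θ : B → A} (hθ : Function.Surjective θ) :
    Function.Surjective (mapNonempty θ) := by
  rintro ⟨w, hw⟩
  obtain ⟨w', rfl⟩ := List.map_surjective_iff.2 hθ w
  exact ⟨⟨w', by simpa using hw⟩, rfl⟩

/-- For a letter-to-letter substitution `θ : B → A` with `θ(B) = A` and `ψ = φ ∘ θ`:
`u ≡_ψ v` implies `θ(u) ≡_φ θ(v)`, and hence the Karnofsky–Rhodes expansion with respect to
`φ` is a homomorphic image of the one with respect to `ψ`. -/
theorem krCong_letter_substitution {B : Type*} [Semigroup S]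
    (θ : B → A) (hθ : Function.Surjective θ)
    (φ : A → S) :
    (∀ u v : List B, u ≠ [] → v ≠ [] →
      KRCong (φ ∘ θ) u v → KRCong φ (u.map θ) (v.map θ)) ∧
    (∃ g : Quot (fun u v : {w : List B // w ≠ []} => KRCong (φ ∘ θ) u.1 v.1) →
           Quot (fun u v : {w : List A // w ≠ []} => KRCong φ u.1 v.1),
      Function.Surjective g ∧
      ∀ u : {w : List B // w ≠ []},
        g (Quot.mk _ u) = Quot.mk _ ⟨u.1.map θ, by simpa using u.2⟩) :=
  ⟨fun _ _ _ _ h => h.map φ hθ,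
    Quot.map (mapNonempty θ) (fun _ _ h => h.map φ hθ),
    Quot.map_surjective _ (mapNonempty_surjective hθ), fun _ => rfl⟩
end

section
/- Let φ : A⁺ → S be a surjective homomorphism onto a finite semigroup. Define u ≡_{φ,Sl} v iff the paths p_u and p_v in the two-sided Cayley graph Γ_φ traverse the same set of edges (same content). Then ≡_{φ,Sl} refines the kernel of φ (u ≡_{φ,Sl} v implies φ(u) = φ(v)) and ≡_{φ,Sl} is a congruence of finite index on A⁺. -/
variable {A S : Type*}

/-- The content relation `≡_{φ,Sl}` (same set of edges traversed). -/
def ContCong [Semigroup S] (φ : A → S) (u v : List A) : Prop :=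
  ∀ e, EdgeOfPath φ u e ↔ EdgeOfPath φ v e


/-!
The last edge of `p_u` is the only one ending at a vertex `(s, 1)`, and it ends at `(φ(u), 1)`;
so the content of `p_u` determines `φ(u)`. Cutting `p_{uw}` at the vertex `(φ(u), φ(w))` gives
`c(p_{uw}) = c(p_u)·(1, φ(w)) ∪ (φ(u), 1)·c(p_w)`, which depends only on the contents and images
of `u` and `w`; with the previous remark this makes `≡_{φ,Sl}` a congruence. Finally `u ↦ c(p_u)`
injects the classes into the subsets of the finite edge set of `Γ_φ`.
-/

instance {S : Type*} [Finite S] : Finite (WithOne S) := inferInstanceAs (Finite (Option S))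

theorem Quot.finite_of_iff_eq {α β : Type*} [Finite β] {r : α → α → Prop} (f : α → β)
    (hr : ∀ a b, r a b ↔ f a = f b) : Finite (Quot r) :=
  Finite.of_injective (Quot.lift f fun a b h => (hr a b).1 h) <| by
    rintro ⟨a⟩ ⟨b⟩ h
    exact Quot.sound ((hr a b).2 h)

namespace CayleyGraph

variable [Semigroup S] (φ : A → S)

abbrev Edge (A S : Type*) := (WithOne S × WithOne S) × A × (WithOne S × WithOne S)

@[simp]
theorem phiStar_cons (a : A) (w : List A) :
    phiStar φ (a :: w) = (φ a : WithOne S) * phiStar φ w := by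
  simp [phiStar]

@[simp]
theorem phiStar_append (u v : List A) :
    phiStar φ (u ++ v) = phiStar φ u * phiStar φ v := by
  simp [phiStar]

theorem phiStar_eq_one_iff {w : List A} : phiStar φ w = 1 ↔ w = [] := by
  cases w with
  | nil => simp [phiStar]
  | cons a w =>
    simp only [phiStar_cons, reduceCtorEq, iff_false]
    induction phiStar φ w using WithOne.cases_on <;> simp [← WithOne.coe_mul]

/-- The edge of `p_u` read at the letter `a`, for a factorisation `u = u₁ a u₂`. -/
def pathEdge (u₁ : List A) (a : A) (u₂ : List A) : Edge A S :=
  ((phiStar φ u₁, phiStar φ (a :: u₂)), a, (phiStar φ (u₁ ++ [a]), phiStar φ u₂))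

theorem edgeOfPath_iff {u : List A} {e : Edge A S} :
    EdgeOfPath φ u e ↔ ∃ u₁ a u₂, u = u₁ ++ a :: u₂ ∧ pathEdge φ u₁ a u₂ = e := by
  constructor
  · rintro ⟨u₁, u₂, rfl, h₁, h₂⟩
    exact ⟨u₁, e.2.1, u₂, rfl, by rw [pathEdge, ← h₁, ← h₂]⟩
  · rintro ⟨u₁, a, u₂, rfl, rfl⟩
    exact ⟨u₁, u₂, rfl, rfl, rfl⟩

/-- The content `c(p_u)`. -/
def content (u : List A) : Set (Edge A S) := {e | EdgeOfPath φ u e}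

theorem contCong_iff_content_eq {u v : List A} :
    ContCong φ u v ↔ content φ u = content φ v :=
  Set.ext_iff.symm

def Edge.mulRight (x : WithOne S) (e : Edge A S) : Edge A S :=
  ((e.1.1, e.1.2 * x), e.2.1, (e.2.2.1, e.2.2.2 * x))

def Edge.mulLeft (x : WithOne S) (e : Edge A S) : Edge A S :=
  ((x * e.1.1, e.1.2), e.2.1, (x * e.2.2.1, e.2.2.2))

theorem pathEdge_mulRight (u₁ : List A) (a : A) (u₂ w : List A) :
    (pathEdge φ u₁ a u₂).mulRight (phiStar φ w) = pathEdge φ u₁ a (u₂ ++ w) := by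
  simp [pathEdge, Edge.mulRight, mul_assoc]

theorem pathEdge_mulLeft (w u₁ : List A) (a : A) (u₂ : List A) :
    (pathEdge φ u₁ a u₂).mulLeft (phiStar φ w) = pathEdge φ (w ++ u₁) a u₂ := by
  simp [pathEdge, Edge.mulLeft]

theorem content_append (u w : List A) :
    content φ (u ++ w) =
      Edge.mulRight (phiStar φ w) '' content φ u ∪ Edge.mulLeft (phiStar φ u) '' content φ w := by
  ext e
  simp only [content, Set.mem_union, Set.mem_image, Set.mem_ofPred_eq, edgeOfPath_iff]
  constructor
  · rintro ⟨u₁, a, u₂, h, rfl⟩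
    rcases List.append_eq_append_iff.mp h with ⟨l, rfl, hw⟩ | ⟨_ | ⟨_, c⟩, rfl, hc⟩
    · exact .inr ⟨_, ⟨l, a, u₂, hw, rfl⟩, pathEdge_mulLeft φ u l a u₂⟩
    · exact .inr ⟨_, ⟨[], a, u₂, hc.symm, rfl⟩, by simp [pathEdge_mulLeft]⟩
    · obtain ⟨rfl, rfl⟩ := List.cons_eq_cons.mp hc
      exact .inl ⟨_, ⟨u₁, a, c, rfl, rfl⟩, pathEdge_mulRight φ u₁ a c w⟩
  · rintro (⟨_, ⟨u₁, a, u₂, rfl, rfl⟩, rfl⟩ | ⟨_, ⟨w₁, a, w₂, rfl, rfl⟩, rfl⟩)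
    · exact ⟨u₁, a, u₂ ++ w, by simp, (pathEdge_mulRight φ u₁ a u₂ w).symm⟩
    · exact ⟨u ++ w₁, a, w₂, by simp, (pathEdge_mulLeft φ u w₁ a w₂).symm⟩

/-- Only the last edge of `p_v` ends at a vertex of the form `(s, 1)`. -/
theorem target_eq_phiStar_of_mem_content {v : List A} {e : Edge A S} (he : e ∈ content φ v)
    (h₁ : e.2.2.2 = 1) : e.2.2.1 = phiStar φ v := by
  obtain ⟨v₁, a, v₂, rfl, rfl⟩ := (edgeOfPath_iff φ).1 he
  obtain rfl : v₂ = [] := (phiStar_eq_one_iff φ).1 h₁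
  rfl

theorem phiStar_eq_of_contCong {u v : List A} (hu : u ≠ []) (h : ContCong φ u v) :
    phiStar φ u = phiStar φ v := by
  obtain ⟨u', a, rfl⟩ := (List.eq_nil_or_concat' u).resolve_left hu
  have hlast : pathEdge φ u' a [] ∈ content φ (u' ++ [a]) :=
    (edgeOfPath_iff φ).2 ⟨u', a, [], rfl, rfl⟩
  have hv : pathEdge φ u' a [] ∈ content φ v := (h _).1 hlast
  rw [← target_eq_phiStar_of_mem_content φ hlast rfl, target_eq_phiStar_of_mem_content φ hv rfl]

theorem contCong_append {u v : List A} (hu : u ≠ []) (h : ContCong φ u v) (w : List A) :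
    ContCong φ (u ++ w) (v ++ w) ∧ ContCong φ (w ++ u) (w ++ v) := by
  have himage := phiStar_eq_of_contCong φ hu h
  rw [contCong_iff_content_eq] at h
  simp only [contCong_iff_content_eq, content_append, h, himage, and_self]

end CayleyGraph

theorem contCong_congruence_finite_index_general [Finite A] [Finite S] [Semigroup S]
    (φ : A → S) :
    (∀ u v : List A, u ≠ [] → v ≠ [] → ContCong φ u v → phiStar φ u = phiStar φ v) ∧
    (∀ u : List A, u ≠ [] → ContCong φ u u) ∧
    (∀ u v : List A, u ≠ [] → v ≠ [] → ContCong φ u v → ContCong φ v u) ∧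
    (∀ u v w : List A, u ≠ [] → v ≠ [] → w ≠ [] →
      ContCong φ u v → ContCong φ v w → ContCong φ u w) ∧
    (∀ u v w : List A, u ≠ [] → v ≠ [] → w ≠ [] → ContCong φ u v →
      ContCong φ (u ++ w) (v ++ w) ∧ ContCong φ (w ++ u) (w ++ v)) ∧
    Finite (Quot fun u v : {w : List A // w ≠ []} => ContCong φ u.1 v.1) :=
  ⟨fun _ _ hu _ h => CayleyGraph.phiStar_eq_of_contCong φ hu h,
    fun _ _ _ => Iff.rfl,
    fun _ _ _ _ h e => (h e).symm,
    fun _ _ _ _ _ _ h₁ h₂ e => (h₁ e).trans (h₂ e),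
    fun _ _ w hu _ _ h => CayleyGraph.contCong_append φ hu h w,
    Quot.finite_of_iff_eq (fun u => CayleyGraph.content φ u.1) fun _ _ =>
      CayleyGraph.contCong_iff_content_eq φ⟩

/-- `≡_{φ,Sl}` refines the kernel of `φ` and is a congruence of finite index on `A⁺`. -/
theorem contCong_congruence_finite_index [Finite A] [Finite S] [Semigroup S]
    (φ : A → S) (hφ : PlusSurj φ) :
    (∀ u v : List A, u ≠ [] → v ≠ [] → ContCong φ u v → phiStar φ u = phiStar φ v) ∧
    (∀ u : List A, u ≠ [] → ContCong φ u u) ∧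
    (∀ u v : List A, u ≠ [] → v ≠ [] → ContCong φ u v → ContCong φ v u) ∧
    (∀ u v w : List A, u ≠ [] → v ≠ [] → w ≠ [] →
      ContCong φ u v → ContCong φ v w → ContCong φ u w) ∧
    (∀ u v w : List A, u ≠ [] → v ≠ [] → w ≠ [] → ContCong φ u v →
      ContCong φ (u ++ w) (v ++ w) ∧ ContCong φ (w ++ u) (w ++ v)) ∧
    Finite (Quot fun u v : {w : List A // w ≠ []} => ContCong φ u.1 v.1) :=
  contCong_congruence_finite_index_general φ
end
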